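/- (Dual Cheeger lower bound) For a finite connected subset Ω of a weighted graph, λ_max(Ω) ≥ 2h̄(Ω) + h(Ω). -/

import Mathlib

open Finset

variable {V : Type*}

noncomputable def deg (μ : V → V → ℝ) (x : V) : ℝ := ∑ᶠ y, μ x y

noncomputable def eSum (μ : V → V → ℝ) (A B : Finset V) : ℝ :=
  ∑ x ∈ A, ∑ y ∈ B, μ x y

noncomputable def vol (μ : V → V → ℝ) (U : Finset V) : ℝ := ∑ x ∈ U, deg μ x

noncomputable def bdry (μ : V → V → ℝ) (U : Finset V) : ℝ := vol μ U - eSum μ U U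

noncomputable def cheeger (μ : V → V → ℝ) (Ω : Finset V) : ℝ :=
  sInf {r : ℝ | ∃ U : Finset V, U.Nonempty ∧ U ⊆ Ω ∧ r = bdry μ U / vol μ U}

noncomputable def dualCheeger (μ : V → V → ℝ) (Ω : Finset V) : ℝ :=
  sSup {r : ℝ | ∃ V₁ V₂ : Finset V, V₁.Nonempty ∧ V₂.Nonempty ∧ Disjoint V₁ V₂ ∧
    V₁ ⊆ Ω ∧ V₂ ⊆ Ω ∧ r = 2 * eSum μ V₁ V₂ / (vol μ V₁ + vol μ V₂)}

noncomputable def dLap (μ : V → V → ℝ) (Ω : Finset V) (f : V → ℝ) (x : V) : ℝ :=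
  f x - (1 / deg μ x) * ∑ y ∈ Ω, μ x y * f y

def IsDirEigfun (μ : V → V → ℝ) (Ω : Finset V) (lam : ℝ) (f : V → ℝ) : Prop :=
  (∃ x ∈ Ω, f x ≠ 0) ∧ (∀ x ∉ Ω, f x = 0) ∧ ∀ x ∈ Ω, dLap μ Ω f x = lam * f x

def IsDirEig (μ : V → V → ℝ) (Ω : Finset V) (lam : ℝ) : Prop :=
  ∃ f : V → ℝ, IsDirEigfun μ Ω lam f

noncomputable def lam1 (μ : V → V → ℝ) (Ω : Finset V) : ℝ :=
  sInf {l : ℝ | IsDirEig μ Ω l}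

noncomputable def lamMax (μ : V → V → ℝ) (Ω : Finset V) : ℝ :=
  sSup {l : ℝ | IsDirEig μ Ω l}

def ConnectedOn (μ : V → V → ℝ) (Ω : Finset V) : Prop :=
  ∀ x ∈ Ω, ∀ y ∈ Ω,
    Relation.ReflTransGen (fun a b => a ∈ Ω ∧ b ∈ Ω ∧ μ a b ≠ 0) x y

def BipartiteOn (μ : V → V → ℝ) (Ω : Finset V) : Prop :=
  ∃ U₁ U₂ : Finset V, Disjoint U₁ U₂ ∧ (U₁ : Set V) ∪ ↑U₂ = ↑Ω ∧
    (∀ x ∈ U₁, ∀ y ∈ U₁, μ x y = 0) ∧ (∀ x ∈ U₂, ∀ y ∈ U₂, μ x y = 0)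

/-!
Conjugating the Dirichlet Laplacian by `D^{1/2}` gives a symmetric matrix, whose top eigenvalue
dominates its Rayleigh quotients; hence `λ_max(Ω) (F, F)_μ ≥ (Δ_Ω F, F)_μ` for every `F`. Dirichlet
eigenvalues are at most `2` (maximum principle), so `λ_max(Ω)` is a genuine supremum.

For disjoint `V₁, V₂ ⊆ Ω` and `F = 1_{V₁} - 1_{V₂}` one finds `(F, F)_μ = vol U` and
`(Δ_Ω F, F)_μ = |∂U| + 4 |E(V₁, V₂)|` with `U = V₁ ∪ V₂`, so
`λ_max(Ω) ≥ |∂U| / vol U + 2 · 2 |E(V₁, V₂)| / (vol V₁ + vol V₂)`, and `|∂U| / vol U ≥ h(Ω)`.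
-/

open Matrix

theorem LinearMap.IsSymmetric.exists_hasEigenvalue_forall_inner_le {E : Type*}
    [NormedAddCommGroup E] [InnerProductSpace ℝ E] [FiniteDimensional ℝ E] [Nontrivial E]
    {T : E →ₗ[ℝ] E} (hT : T.IsSymmetric) :
    ∃ lam, Module.End.HasEigenvalue T lam ∧ ∀ x, inner ℝ (T x) x ≤ lam * ‖x‖ ^ 2 := by
  refine ⟨_, hT.hasEigenvalue_iSup_of_finiteDimensional, fun x => ?_⟩
  rcases eq_or_ne x 0 with rfl | hx
  · simp
  have hbdd : BddAbove (Set.range fun x : {x : E // x ≠ 0} =>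
      RCLike.re (inner ℝ (T x) (x : E)) / ‖(x : E)‖ ^ 2) := by
    refine ⟨‖LinearMap.toContinuousLinearMap T‖, ?_⟩
    rintro _ ⟨y, rfl⟩
    exact (le_abs_self _).trans ((LinearMap.toContinuousLinearMap T).rayleighQuotient_le_norm y)
  have := le_ciSup hbdd ⟨x, hx⟩
  rw [div_le_iff₀ (by positivity)] at this
  simpa using this

theorem Matrix.IsHermitian.exists_mulVec_eq_smul_forall_dotProduct_le {n : Type*} [Fintype n]
    [Nonempty n] {A : Matrix n n ℝ} (hA : A.IsHermitian) :
    ∃ (lam : ℝ) (v : n → ℝ), v ≠ 0 ∧ A *ᵥ v = lam • v ∧ ∀ g, g ⬝ᵥ A *ᵥ g ≤ lam * (g ⬝ᵥ g) := by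
  classical
  obtain ⟨lam, hlam, hle⟩ :=
    (isSymmetric_toEuclideanLin_iff.2 hA).exists_hasEigenvalue_forall_inner_le
  obtain ⟨v, hv⟩ := hlam.exists_hasEigenvector
  refine ⟨lam, WithLp.ofLp v, by simpa using hv.2, congrArg WithLp.ofLp hv.apply_eq_smul,
    fun g => ?_⟩
  have := hle (WithLp.toLp 2 g)
  rw [← real_inner_self_eq_norm_sq, toLpLin_toLp, EuclideanSpace.inner_toLp_toLp,
    EuclideanSpace.inner_toLp_toLp] at this
  simpa only [star_trivial, toLin'_apply, WithLp.ofLp_toLp] using this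

section

variable {μ : V → V → ℝ} {Ω : Finset V}

lemma sum_le_deg (hnn : ∀ x y, 0 ≤ μ x y) (hfin : ∀ x, (Function.support (μ x)).Finite)
    (x : V) (s : Finset V) : ∑ y ∈ s, μ x y ≤ deg μ x := by
  classical
  rw [deg, finsum_eq_sum_of_support_subset (s := s ∪ (hfin x).toFinset) _
    (by rw [coe_union, Set.Finite.coe_toFinset]; exact Set.subset_union_right)]
  exact sum_le_sum_of_subset_of_nonneg subset_union_left fun y _ _ => hnn x y

lemma bdry_nonneg (hnn : ∀ x y, 0 ≤ μ x y) (hfin : ∀ x, (Function.support (μ x)).Finite)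
    (U : Finset V) : 0 ≤ bdry μ U :=
  sub_nonneg.2 <| sum_le_sum fun x _ => sum_le_deg hnn hfin x U

lemma vol_pos (hdeg : ∀ x, 0 < deg μ x) {U : Finset V} (hU : U.Nonempty) : 0 < vol μ U :=
  sum_pos (fun x _ => hdeg x) hU

lemma cheeger_le (hnn : ∀ x y, 0 ≤ μ x y) (hfin : ∀ x, (Function.support (μ x)).Finite)
    (hdeg : ∀ x, 0 < deg μ x) {U : Finset V} (hU : U.Nonempty) (hUΩ : U ⊆ Ω) :
    cheeger μ Ω ≤ bdry μ U / vol μ U := by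
  refine csInf_le ⟨0, ?_⟩ ⟨U, hU, hUΩ, rfl⟩
  rintro _ ⟨W, hW, -, rfl⟩
  exact div_nonneg (bdry_nonneg hnn hfin W) (vol_pos hdeg hW).le

lemma IsDirEig.le_two (hnn : ∀ x y, 0 ≤ μ x y) (hfin : ∀ x, (Function.support (μ x)).Finite)
    (hdeg : ∀ x, 0 < deg μ x) {lam : ℝ} (hlam : IsDirEig μ Ω lam) : lam ≤ 2 := by
  obtain ⟨f, ⟨x₀, hx₀, hfx₀⟩, -, heig⟩ := hlam
  obtain ⟨x, hx, hmax⟩ := Ω.exists_max_image (fun y => |f y|) ⟨x₀, hx₀⟩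
  have hfx : 0 < |f x| := (abs_pos.2 hfx₀).trans_le (hmax x₀ hx₀)
  have hsum : |∑ y ∈ Ω, μ x y * f y| ≤ deg μ x * |f x| :=
    calc |∑ y ∈ Ω, μ x y * f y| ≤ ∑ y ∈ Ω, μ x y * |f x| := by
          refine (abs_sum_le_sum_abs _ _).trans (sum_le_sum fun y hy => ?_)
          rw [abs_mul, abs_of_nonneg (hnn x y)]
          exact mul_le_mul_of_nonneg_left (hmax y hy) (hnn x y)
      _ ≤ deg μ x * |f x| := by
          rw [← sum_mul]
          exact mul_le_mul_of_nonneg_right (sum_le_deg hnn hfin x Ω) (abs_nonneg _)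
  have : |lam| * |f x| ≤ 2 * |f x| :=
    calc |lam| * |f x| = |f x - (deg μ x)⁻¹ * ∑ y ∈ Ω, μ x y * f y| := by
          rw [← abs_mul, ← heig x hx, dLap, one_div]
      _ ≤ |f x| + (deg μ x)⁻¹ * (deg μ x * |f x|) := by
          grw [abs_sub, abs_mul, abs_inv, abs_of_pos (hdeg x), hsum]
          exact inv_nonneg.2 (hdeg x).le
      _ = 2 * |f x| := by field_simp [(hdeg x).ne']; ring
  exact (le_abs_self lam).trans (le_of_mul_le_mul_right this hfx)

lemma IsDirEig.le_lamMax (hnn : ∀ x y, 0 ≤ μ x y) (hfin : ∀ x, (Function.support (μ x)).Finite)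
    (hdeg : ∀ x, 0 < deg μ x) {lam : ℝ} (hlam : IsDirEig μ Ω lam) : lam ≤ lamMax μ Ω :=
  le_csSup ⟨2, fun _ h => h.le_two hnn hfin hdeg⟩ hlam

open Classical in
/-- The symmetrically normalised Laplacian `D^{-1/2} (D - A) D^{-1/2}` of `Ω`; it is conjugate to
the Dirichlet Laplacian `dLap μ Ω` by `D^{1/2}`. -/
noncomputable def symLap (μ : V → V → ℝ) (Ω : Finset V) : Matrix Ω Ω ℝ :=
  1 - Matrix.of fun i j : Ω => μ i j / (√(deg μ i) * √(deg μ j))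

lemma symLap_isHermitian (hsymm : ∀ x y, μ x y = μ y x) : (symLap μ Ω).IsHermitian := by
  classical
  refine isHermitian_one.sub ?_
  ext i j
  simp [hsymm (i : V), mul_comm]

lemma symLap_mulVec_sqrt_deg_mul (hdeg : ∀ x, 0 < deg μ x) (f : V → ℝ) (i : Ω) :
    (symLap μ Ω *ᵥ fun j => √(deg μ j) * f j) i = √(deg μ i) * dLap μ Ω f i := by
  classical
  have hsq : ∀ x, √(deg μ x) ≠ 0 := fun x => (Real.sqrt_pos.2 (hdeg x)).ne'
  have hrow : ∑ j : Ω, μ i j / (√(deg μ i) * √(deg μ j)) * (√(deg μ j) * f j)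
      = (∑ y ∈ Ω, μ i y * f y) / √(deg μ i) := by
    rw [← sum_coe_sort Ω, sum_div]
    refine sum_congr rfl fun j _ => ?_
    field_simp [hsq i, hsq j]
  rw [symLap, sub_mulVec, one_mulVec, Pi.sub_apply, mulVec, dotProduct]
  simp only [of_apply, hrow, dLap]
  field_simp [hsq i]
  rw [Real.sq_sqrt (hdeg i).le]
  field_simp [(hdeg i).ne']

/-- The quadratic form `(Δ_Ω F, F)_μ`. -/
noncomputable def lapForm (μ : V → V → ℝ) (Ω : Finset V) (F : V → ℝ) : ℝ :=
  ∑ x ∈ Ω, deg μ x * dLap μ Ω F x * F x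

/-- The weighted norm `(F, F)_μ` on `Ω`. -/
noncomputable def normSq (μ : V → V → ℝ) (Ω : Finset V) (F : V → ℝ) : ℝ :=
  ∑ x ∈ Ω, deg μ x * F x ^ 2

lemma normSq_nonneg (hdeg : ∀ x, 0 < deg μ x) (F : V → ℝ) : 0 ≤ normSq μ Ω F :=
  sum_nonneg fun x _ => mul_nonneg (hdeg x).le (sq_nonneg _)

lemma isDirEig_of_symLap_mulVec (hdeg : ∀ x, 0 < deg μ x) {lam : ℝ} {v : Ω → ℝ} (hv : v ≠ 0)
    (hvl : symLap μ Ω *ᵥ v = lam • v) : IsDirEig μ Ω lam := by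
  classical
  have hsq : ∀ x, √(deg μ x) ≠ 0 := fun x => (Real.sqrt_pos.2 (hdeg x)).ne'
  set f : V → ℝ := fun x => if h : x ∈ Ω then v ⟨x, h⟩ / √(deg μ x) else 0
  have hvf : v = fun j : Ω => √(deg μ j) * f j := by
    ext j
    simp [f, mul_div_cancel₀ _ (hsq j)]
  obtain ⟨i, hi⟩ := Function.ne_iff.1 hv
  refine ⟨f, ⟨i, i.2, by simpa [f, hsq] using hi⟩, fun x hx => dif_neg hx, fun x hx => ?_⟩
  have := congrFun hvl ⟨x, hx⟩
  rw [hvf, symLap_mulVec_sqrt_deg_mul hdeg, Pi.smul_apply, smul_eq_mul, mul_left_comm] at this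
  exact mul_left_cancel₀ (hsq x) this

lemma lapForm_le_lamMax_mul_normSq (hsymm : ∀ x y, μ x y = μ y x) (hnn : ∀ x y, 0 ≤ μ x y)
    (hfin : ∀ x, (Function.support (μ x)).Finite) (hdeg : ∀ x, 0 < deg μ x)
    (hΩ : Ω.Nonempty) (F : V → ℝ) : lapForm μ Ω F ≤ lamMax μ Ω * normSq μ Ω F := by
  classical
  have := hΩ.to_subtype
  obtain ⟨lam, v, hv, hvl, hle⟩ :=
    (symLap_isHermitian hsymm (Ω := Ω)).exists_mulVec_eq_smul_forall_dotProduct_le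
  set g : Ω → ℝ := fun j => √(deg μ j) * F j
  have hform : g ⬝ᵥ symLap μ Ω *ᵥ g = lapForm μ Ω F := by
    rw [lapForm, ← sum_coe_sort Ω]
    refine sum_congr rfl fun j _ => ?_
    rw [symLap_mulVec_sqrt_deg_mul hdeg]
    linear_combination (dLap μ Ω F j * F j) * Real.mul_self_sqrt (hdeg j).le
  have hnorm : g ⬝ᵥ g = normSq μ Ω F := by
    rw [normSq, ← sum_coe_sort Ω]
    refine sum_congr rfl fun j _ => ?_
    linear_combination F j ^ 2 * Real.mul_self_sqrt (hdeg j).le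
  calc lapForm μ Ω F = g ⬝ᵥ symLap μ Ω *ᵥ g := hform.symm
    _ ≤ lam * normSq μ Ω F := hnorm ▸ hle g
    _ ≤ lamMax μ Ω * normSq μ Ω F :=
      mul_le_mul_of_nonneg_right ((isDirEig_of_symLap_mulVec hdeg hv hvl).le_lamMax hnn hfin hdeg)
        (normSq_nonneg hdeg F)

lemma eSum_comm (hsymm : ∀ x y, μ x y = μ y x) (A B : Finset V) : eSum μ A B = eSum μ B A := by
  rw [eSum, eSum, sum_comm]
  simp_rw [hsymm]

lemma eSum_union_left [DecidableEq V] {A B : Finset V} (h : Disjoint A B) (C : Finset V) :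
    eSum μ (A ∪ B) C = eSum μ A C + eSum μ B C :=
  sum_union h

lemma eSum_union_right [DecidableEq V] (A : Finset V) {B C : Finset V} (h : Disjoint B C) :
    eSum μ A (B ∪ C) = eSum μ A B + eSum μ A C := by
  simp only [eSum, sum_union h, sum_add_distrib]

lemma lapForm_eq_normSq_sub (hdeg : ∀ x, 0 < deg μ x) (F : V → ℝ) :
    lapForm μ Ω F = normSq μ Ω F - ∑ x ∈ Ω, ∑ y ∈ Ω, μ x y * F x * F y := by
  rw [lapForm, normSq, ← sum_sub_distrib]
  refine sum_congr rfl fun x _ => ?_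
  simp_rw [dLap, mul_right_comm (μ x _) (F x), ← sum_mul]
  field_simp [(hdeg x).ne']

lemma sum_sum_mul_indicator_mul_indicator {A B : Finset V} (hA : A ⊆ Ω) (hB : B ⊆ Ω) :
    ∑ x ∈ Ω, ∑ y ∈ Ω, μ x y * (A : Set V).indicator 1 x * (B : Set V).indicator 1 y
      = eSum μ A B := by
  classical
  simp [Set.indicator_apply, mul_ite, sum_ite_mem, inter_eq_right.2 hA, inter_eq_right.2 hB, eSum]

lemma vol_union [DecidableEq V] {A B : Finset V} (h : Disjoint A B) :
    vol μ (A ∪ B) = vol μ A + vol μ B :=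
  sum_union h

lemma normSq_indicator_sub_indicator [DecidableEq V] {V₁ V₂ : Finset V} (h : Disjoint V₁ V₂)
    (hU : V₁ ∪ V₂ ⊆ Ω) :
    normSq μ Ω ((V₁ : Set V).indicator 1 - (V₂ : Set V).indicator 1) = vol μ (V₁ ∪ V₂) := by
  rw [normSq, vol, ← sum_indicator_subset _ hU]
  refine sum_congr rfl fun x _ => ?_
  by_cases h₁ : x ∈ V₁ <;> by_cases h₂ : x ∈ V₂
  · exact absurd h₂ (disjoint_left.1 h h₁)
  all_goals simp [h₁, h₂]

lemma lapForm_indicator_sub_indicator [DecidableEq V] (hsymm : ∀ x y, μ x y = μ y x)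
    (hdeg : ∀ x, 0 < deg μ x) {V₁ V₂ : Finset V} (h : Disjoint V₁ V₂) (h₁ : V₁ ⊆ Ω)
    (h₂ : V₂ ⊆ Ω) :
    lapForm μ Ω ((V₁ : Set V).indicator 1 - (V₂ : Set V).indicator 1)
      = bdry μ (V₁ ∪ V₂) + 4 * eSum μ V₁ V₂ := by
  rw [lapForm_eq_normSq_sub hdeg, normSq_indicator_sub_indicator h (union_subset h₁ h₂)]
  simp only [Pi.sub_apply, mul_sub, sub_mul, sum_sub_distrib,
    sum_sum_mul_indicator_mul_indicator h₁ h₁, sum_sum_mul_indicator_mul_indicator h₁ h₂,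
    sum_sum_mul_indicator_mul_indicator h₂ h₁, sum_sum_mul_indicator_mul_indicator h₂ h₂]
  rw [bdry, eSum_union_left h, eSum_union_right _ h, eSum_union_right _ h,
    eSum_comm hsymm V₂ V₁]
  ring

lemma two_mul_ratio_add_cheeger_le_lamMax (hsymm : ∀ x y, μ x y = μ y x)
    (hnn : ∀ x y, 0 ≤ μ x y) (hfin : ∀ x, (Function.support (μ x)).Finite)
    (hdeg : ∀ x, 0 < deg μ x) {V₁ V₂ : Finset V} (hV₁ : V₁.Nonempty) (h : Disjoint V₁ V₂)
    (h₁ : V₁ ⊆ Ω) (h₂ : V₂ ⊆ Ω) :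
    2 * (2 * eSum μ V₁ V₂ / (vol μ V₁ + vol μ V₂)) + cheeger μ Ω ≤ lamMax μ Ω := by
  classical
  have hU : (V₁ ∪ V₂).Nonempty := hV₁.mono subset_union_left
  have hvol := vol_pos hdeg hU
  have hray := lapForm_le_lamMax_mul_normSq hsymm hnn hfin hdeg (hV₁.mono h₁)
    ((V₁ : Set V).indicator 1 - (V₂ : Set V).indicator 1)
  rw [lapForm_indicator_sub_indicator hsymm hdeg h h₁ h₂,
    normSq_indicator_sub_indicator h (union_subset h₁ h₂)] at hray
  calc 2 * (2 * eSum μ V₁ V₂ / (vol μ V₁ + vol μ V₂)) + cheeger μ Ω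
      ≤ 2 * (2 * eSum μ V₁ V₂ / vol μ (V₁ ∪ V₂)) + bdry μ (V₁ ∪ V₂) / vol μ (V₁ ∪ V₂) := by
        rw [← vol_union h]
        grw [cheeger_le hnn hfin hdeg hU (union_subset h₁ h₂)]
    _ = (bdry μ (V₁ ∪ V₂) + 4 * eSum μ V₁ V₂) / vol μ (V₁ ∪ V₂) := by ring
    _ ≤ lamMax μ Ω := (div_le_iff₀ hvol).2 hray

end

theorem stmt10_general {V : Type*} (μ : V → V → ℝ) (hsymm : ∀ x y, μ x y = μ y x) (hnn : ∀ x y, 0 ≤ μ x y)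
    (hfin : ∀ x : V, (Function.support (μ x)).Finite) (hdeg : ∀ x : V, 0 < deg μ x)
    (Ω : Finset V) (hcard : 2 ≤ Ω.card) :
    2 * dualCheeger μ Ω + cheeger μ Ω ≤ lamMax μ Ω := by
  classical
  obtain ⟨a, ha, b, hb, hab⟩ := one_lt_card.1 hcard
  have hdual : dualCheeger μ Ω ≤ (lamMax μ Ω - cheeger μ Ω) / 2 := by
    refine csSup_le ⟨_, {a}, {b}, singleton_nonempty a, singleton_nonempty b,
      disjoint_singleton.2 hab, singleton_subset_iff.2 ha, singleton_subset_iff.2 hb, rfl⟩ ?_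
    rintro _ ⟨V₁, V₂, hV₁, -, h, h₁, h₂, rfl⟩
    linarith [two_mul_ratio_add_cheeger_le_lamMax hsymm hnn hfin hdeg hV₁ h h₁ h₂]
  linarith

theorem stmt10 {V : Type*} [Infinite V] (μ : V → V → ℝ) (hsymm : ∀ x y, μ x y = μ y x) (hnn : ∀ x y, 0 ≤ μ x y)
    (hfin : ∀ x : V, (Function.support (μ x)).Finite) (hdeg : ∀ x : V, 0 < deg μ x)
    (hconnG : ∀ x y : V, Relation.ReflTransGen (fun a b => μ a b ≠ 0) x y)
    (Ω : Finset V) (hconn : ConnectedOn μ Ω) (hcard : 2 ≤ Ω.card) :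
    2 * dualCheeger μ Ω + cheeger μ Ω ≤ lamMax μ Ω :=
  stmt10_general μ hsymm hnn hfin hdeg Ω hcard
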